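/- Let T be a finite plane tree with maximal arity m, and let v' be the parent of a non-root node u, with v' at depth ℓ (i.e., distance ℓ from the root). With x_u defined via x_u = d(u) + Σ_{i=1}^{d(u)} c(u_i)(m+2)^{-i}, one has 1 < x_u - x_{v'} < 1 + (m+2)^{-ℓ+1}. -/

import Mathlib

inductive PlaneTree where
  | node : List PlaneTree → PlaneTree

namespace PlaneTree

def childrenOf : PlaneTree → List PlaneTree
  | .node cs => cs

def numNodes : PlaneTree → ℕ
  | .node cs => 1 + (cs.attach.map (fun c => numNodes c.1)).sum
decreasing_by have := List.sizeOf_lt_of_mem c.2; simp only [PlaneTree.node.sizeOf_spec]; omega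

/-- maximal number of children of a node of the tree -/
def maxArity : PlaneTree → ℕ
  | .node cs => max cs.length ((cs.attach.map (fun c => maxArity c.1)).foldr max 0)
decreasing_by have := List.sizeOf_lt_of_mem c.2; simp only [PlaneTree.node.sizeOf_spec]; omega

/-- the subtree rooted at the node reached by following the path `p` of
(0-based, left-to-right) child indices from the root, if it exists. -/
def subtreeAt : PlaneTree → List ℕ → Option PlaneTree
  | t, [] => some t
  | t, i :: p =>
    match (childrenOf t)[i]? with
    | some c => subtreeAt c p
    | none => none

/-- `p` is a valid path to a node of `t` (the root is `[]`); the depth of the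
corresponding node is `p.length`. -/
def IsNode (t : PlaneTree) (p : List ℕ) : Prop := (t.subtreeAt p).isSome

/-- number of children of the node at path `p` (0 if the path is invalid). -/
def arityAt (t : PlaneTree) (p : List ℕ) : ℕ :=
  ((t.subtreeAt p).map (fun s => s.childrenOf.length)).getD 0

/-- `c(u_{i+1})`: the sibling index, counted from right to left starting at 1,
of the node at depth `i+1` on the path `p`. -/
def cAt (t : PlaneTree) (p : List ℕ) (i : ℕ) : ℕ :=
  arityAt t (p.take i) - p.getD i 0

/-- `x_u = d(u) + Σ_{i=1}^{d(u)} c(u_i) (m+2)^{-i}` for the node `u` at path `p`,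
where `m` is the maximal arity of `t`. -/
noncomputable def xVal (t : PlaneTree) (p : List ℕ) : ℝ :=
  (p.length : ℝ) + ∑ i ∈ Finset.range p.length,
    (cAt t p i : ℝ) * ((maxArity t : ℝ) + 2) ^ (-(i + 1 : ℤ))

end PlaneTree

/-!
Appending a child index `j` to the path of `v'` raises the depth by one and adds a single new
term `c(u) (m+2)^{-(ℓ+1)}` to the sum, the earlier terms being unchanged. Since
`1 ≤ c(u) ≤ m < (m+2)^2`, this term lies strictly between `0` and `(m+2)^{-ℓ+1}`.
-/

namespace PlaneTree

theorem maxArity_le_of_mem {c : PlaneTree} {cs : List PlaneTree} (h : c ∈ cs) :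
    maxArity c ≤ maxArity (.node cs) := by
  rw [maxArity]
  exact le_max_of_le_right <|
    List.le_max_of_le' 0 (List.mem_map.2 ⟨⟨c, h⟩, List.mem_attach _ _, rfl⟩) le_rfl

theorem length_childrenOf_le_maxArity : ∀ t : PlaneTree, t.childrenOf.length ≤ maxArity t
  | .node cs => by rw [maxArity, childrenOf]; exact le_max_left _ _

theorem maxArity_le_of_subtreeAt_eq_some {t s : PlaneTree} {q : List ℕ}
    (h : t.subtreeAt q = some s) : maxArity s ≤ maxArity t := by
  induction q generalizing t with
  | nil => cases h; rfl
  | cons i q ih =>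
    obtain ⟨cs⟩ := t
    rw [subtreeAt, childrenOf] at h
    cases hc : cs[i]? with
    | none => simp [hc] at h
    | some c =>
      rw [hc] at h
      exact (ih h).trans (maxArity_le_of_mem (List.mem_of_getElem? hc))

theorem arityAt_le_maxArity (t : PlaneTree) (q : List ℕ) : arityAt t q ≤ maxArity t := by
  cases h : t.subtreeAt q with
  | none => simp [arityAt, h]
  | some s =>
    simpa [arityAt, h] using
      (length_childrenOf_le_maxArity s).trans (maxArity_le_of_subtreeAt_eq_some h)

theorem subtreeAt_append_singleton (t : PlaneTree) (q : List ℕ) (j : ℕ) :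
    t.subtreeAt (q ++ [j]) = (t.subtreeAt q).bind fun s => s.childrenOf[j]? := by
  induction q generalizing t with
  | nil => cases h : t.childrenOf[j]? <;> simp [subtreeAt, h]
  | cons i q ih =>
    simp only [List.cons_append, subtreeAt]
    cases t.childrenOf[i]? <;> simp [ih]

theorem IsNode.lt_arityAt {t : PlaneTree} {q : List ℕ} {j : ℕ} (h : IsNode t (q ++ [j])) :
    j < arityAt t q := by
  rw [IsNode, subtreeAt_append_singleton] at h
  cases hs : t.subtreeAt q with
  | none => simp [hs] at h
  | some s => simpa [hs, arityAt] using h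

theorem cAt_append_of_lt (t : PlaneTree) {q : List ℕ} (r : List ℕ) {i : ℕ}
    (hi : i < q.length) : cAt t (q ++ r) i = cAt t q i := by
  rw [cAt, cAt, List.take_append_of_le_length hi.le, List.getD_eq_getElem?_getD,
    List.getD_eq_getElem?_getD, List.getElem?_append_left hi]

theorem cAt_append_singleton_length (t : PlaneTree) (q : List ℕ) (j : ℕ) :
    cAt t (q ++ [j]) q.length = arityAt t q - j := by
  rw [cAt, List.take_left, List.getD_eq_getElem?_getD, List.getElem?_concat_length]
  rfl

theorem xVal_append_singleton_sub (t : PlaneTree) (q : List ℕ) (j : ℕ) :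
    xVal t (q ++ [j]) - xVal t q = 1 +
      ((arityAt t q - j : ℕ) : ℝ) * ((maxArity t : ℝ) + 2) ^ (-(q.length + 1 : ℤ)) := by
  rw [xVal, xVal, List.length_append, List.length_singleton, Finset.sum_range_succ,
    cAt_append_singleton_length,
    Finset.sum_congr rfl fun i hi => by rw [cAt_append_of_lt t [j] (Finset.mem_range.1 hi)]]
  push_cast
  ring

end PlaneTree

open PlaneTree

/-- If `v'` is the parent (at depth `ℓ`) of a non-root node `u`, then
`1 < x_u - x_{v'} < 1 + (m+2)^{-ℓ+1}`, where `m` is the maximal arity. -/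
theorem xVal_sub_parent_bounds (t : PlaneTree) (p : List ℕ)
    (hp : IsNode t p) (hp0 : p ≠ []) :
    1 < xVal t p - xVal t p.dropLast ∧
      xVal t p - xVal t p.dropLast <
        1 + ((maxArity t : ℝ) + 2) ^ (-(p.dropLast.length : ℤ) + 1) := by
  obtain ⟨q, j, rfl⟩ : ∃ q j, p = q ++ [j] :=
    ⟨p.dropLast, p.getLast hp0, (List.dropLast_append_getLast hp0).symm⟩
  rw [List.dropLast_concat, xVal_append_singleton_sub]
  set c : ℕ := arityAt t q - j
  set M : ℝ := (maxArity t : ℝ) + 2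
  have hc_pos : 1 ≤ (c : ℝ) := by have := hp.lt_arityAt; norm_cast; omega
  have hc_lt : (c : ℝ) < M ^ (2 : ℤ) := by
    have : (c : ℝ) ≤ maxArity t := by have := arityAt_le_maxArity t q; norm_cast; omega
    rw [zpow_two]; nlinarith
  have hpow_pos : 0 < M ^ (-(q.length + 1 : ℤ)) := zpow_pos (by positivity) _
  have hpow_split : M ^ (-(q.length : ℤ) + 1) = M ^ (2 : ℤ) * M ^ (-(q.length + 1 : ℤ)) := by
    rw [← zpow_add₀ (by positivity)]; ring_nf
  rw [hpow_split]
  constructor <;> nlinarith
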